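/- arXiv:1611.02802 — 2 statements merged into one kernel-verified Lean document; each statement's English description precedes it below -/
import Mathlib

section
/- Under the CAM procedure with the symmetric first-pair convention, conditional on the covariates x_1,…,x_n, the allocation vector (T_1,…,T_n) and its complement (1−T_1,…,1−T_n) have the same distribution; consequently P(T_i = 1 | x_1,…,x_n) = 1/2 for every i = 1,…,n. -/
open MeasureTheory ProbabilityTheory Matrix Finset

noncomputable section

/-- Mahalanobis imbalance measure `M(2m)` computed from the imbalance vector
`y = m * (x̄₁ - x̄₂)` of a balanced allocation of `2m` units:
`M(2m) = (2m) pₙ (1-pₙ) (x̄₁-x̄₂)ᵀ Σ⁻¹ (x̄₁-x̄₂)` with `pₙ = 1/2`. -/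
def camMval (p : ℕ) (Minv : Matrix (Fin p) (Fin p) ℝ) (m : ℕ) (y : Fin p → ℝ) : ℝ :=
  (2 * (m : ℝ)) * (1 / 2) * (1 / 2) *
    ((fun j => y j / m) ⬝ᵥ Minv.mulVec (fun j => y j / m))

/-- Imbalance vector `y_k = Σ_{i : T_i = 1} x_i - Σ_{i : T_i = 0} x_i` after `k` pairs have been
allocated by the CAM procedure with biased-coin parameter `q`, driven by the auxiliary
i.i.d. uniform coins `u`.  Pair `k` (`k ≥ 1`) consists of units `2k` and `2k+1`; it is assigned
`(T_{2k}, T_{2k+1}) = (1,0)` (sign `+1`) with probability `q`, `1-q` or `1/2` according to whether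
the potential Mahalanobis distance `M_k^{(1)}` resulting from `(1,0)` is smaller than, larger
than, or equal to the potential distance `M_k^{(2)}` resulting from `(0,1)`; the first pair gets
the sign `s₀`. -/
def camY (p : ℕ) (q : ℝ) (Minv : Matrix (Fin p) (Fin p) ℝ)
    (x : ℕ → Fin p → ℝ) (u : ℕ → ℝ) (s₀ : ℝ) : ℕ → Fin p → ℝ
  | 0 => 0
  | k + 1 =>
    let y := camY p q Minv x u s₀ k
    let d : Fin p → ℝ := fun j => x (2 * k) j - x (2 * k + 1) j
    let M1 : ℝ := camMval p Minv (k + 1) (fun j => y j + d j)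
    let M2 : ℝ := camMval p Minv (k + 1) (fun j => y j - d j)
    let prob : ℝ := if M1 < M2 then q else if M2 < M1 then 1 - q else 1 / 2
    let s : ℝ := if k = 0 then s₀ else if u k < prob then 1 else -1
    fun j => y j + s * d j

/-- The sign of the `k`-th pair under the CAM procedure (`+1` means `(T_{2k},T_{2k+1}) = (1,0)`,
`-1` means `(0,1)`). -/
def camSign (p : ℕ) (q : ℝ) (Minv : Matrix (Fin p) (Fin p) ℝ)
    (x : ℕ → Fin p → ℝ) (u : ℕ → ℝ) (s₀ : ℝ) (k : ℕ) : ℝ :=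
  if k = 0 then s₀ else
    let y := camY p q Minv x u s₀ k
    let d : Fin p → ℝ := fun j => x (2 * k) j - x (2 * k + 1) j
    let M1 : ℝ := camMval p Minv (k + 1) (fun j => y j + d j)
    let M2 : ℝ := camMval p Minv (k + 1) (fun j => y j - d j)
    let prob : ℝ := if M1 < M2 then q else if M2 < M1 then 1 - q else 1 / 2
    if u k < prob then 1 else -1

/-- Treatment label (`0` or `1`, as a real number) of unit `i` (0-indexed) under the CAM
procedure: unit `i` belongs to pair `i / 2`. -/
def camT (p : ℕ) (q : ℝ) (Minv : Matrix (Fin p) (Fin p) ℝ)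
    (x : ℕ → Fin p → ℝ) (u : ℕ → ℝ) (s₀ : ℝ) (i : ℕ) : ℝ :=
  if camSign p q Minv x u s₀ (i / 2) = 1 then (if i % 2 = 0 then 1 else 0)
  else (if i % 2 = 0 then 0 else 1)

/-- Mahalanobis distance `M(n)` for `n = 2m` units allocated by the CAM procedure. -/
def camM (p : ℕ) (q : ℝ) (Minv : Matrix (Fin p) (Fin p) ℝ)
    (x : ℕ → Fin p → ℝ) (u : ℕ → ℝ) (s₀ : ℝ) (m : ℕ) : ℝ :=
  camMval p Minv m (camY p q Minv x u s₀ m)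

/-- The symmetric first-pair convention: the first pair receives `(T₁,T₂) = (1,0)` or `(0,1)`
with probability `1/2` each, using the auxiliary uniform coin `u 0`. -/
def symSign (u : ℕ → ℝ) : ℝ := if u 0 < 1 / 2 then 1 else -1

end

noncomputable section CamAux
open MeasureTheory ProbabilityTheory Matrix Finset

namespace CamAux

variable (p : ℕ) (q : ℝ) (Minv : Matrix (Fin p) (Fin p) ℝ)

/-- flip of coins -/
def flipU (u : ℕ → ℝ) : ℕ → ℝ := fun k => 1 - u k

/-- probability used at step k -/
def camProb (x : ℕ → Fin p → ℝ) (u : ℕ → ℝ) (s₀ : ℝ) (k : ℕ) : ℝ :=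
  let y := camY p q Minv x u s₀ k
  let d : Fin p → ℝ := fun j => x (2 * k) j - x (2 * k + 1) j
  let M1 : ℝ := camMval p Minv (k + 1) (fun j => y j + d j)
  let M2 : ℝ := camMval p Minv (k + 1) (fun j => y j - d j)
  if M1 < M2 then q else if M2 < M1 then 1 - q else 1 / 2

lemma camY_succ (x : ℕ → Fin p → ℝ) (u : ℕ → ℝ) (s₀ : ℝ) (k : ℕ) :
    camY p q Minv x u s₀ (k + 1) = fun j =>
      camY p q Minv x u s₀ k j +
        (if k = 0 then s₀ else if u k < camProb p q Minv x u s₀ k then 1 else -1) *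
          (x (2 * k) j - x (2 * k + 1) j) := by
  rfl

lemma camSign_eq (x : ℕ → Fin p → ℝ) (u : ℕ → ℝ) (s₀ : ℝ) (k : ℕ) :
    camSign p q Minv x u s₀ k =
      if k = 0 then s₀ else if u k < camProb p q Minv x u s₀ k then 1 else -1 := by
  rfl

lemma camMval_neg (m : ℕ) (z : Fin p → ℝ) :
    camMval p Minv m (fun j => -z j) = camMval p Minv m z := by
  unfold camMval
  congr 1
  have : (fun j => -z j / (m : ℝ)) = fun j => -(z j / m) := by funext j; ring
  rw [this]
  have h2 : (fun j => -(z j / (m : ℝ))) = -(fun j => z j / m) := rfl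
  rw [h2, Matrix.mulVec_neg, dotProduct_neg, neg_dotProduct, neg_neg]

lemma camY_flip (x : ℕ → Fin p → ℝ) (u : ℕ → ℝ) (s₀ : ℝ)
    (hbad : ∀ k, 1 ≤ k → u k ≠ camProb p q Minv x u s₀ k) :
    ∀ k, camY p q Minv x (flipU u) (-s₀) k = fun j => -(camY p q Minv x u s₀ k j) := by
  intro k
  induction k with
  | zero => funext j; simp [camY]
  | succ k ih =>
      have hprob : camProb p q Minv x (flipU u) (-s₀) k = 1 - camProb p q Minv x u s₀ k := by
        unfold camProb
        rw [ih]
        have h1 : (fun j => -camY p q Minv x u s₀ k j + (x (2*k) j - x (2*k+1) j))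
            = fun j => -(camY p q Minv x u s₀ k j - (x (2*k) j - x (2*k+1) j)) := by
          funext j; ring
        have h2 : (fun j => -camY p q Minv x u s₀ k j - (x (2*k) j - x (2*k+1) j))
            = fun j => -(camY p q Minv x u s₀ k j + (x (2*k) j - x (2*k+1) j)) := by
          funext j; ring
        simp only [h1, h2, camMval_neg]
        set A := camMval p Minv (k+1) (fun j => camY p q Minv x u s₀ k j + (x (2*k) j - x (2*k+1) j))
        set B := camMval p Minv (k+1) (fun j => camY p q Minv x u s₀ k j - (x (2*k) j - x (2*k+1) j))
        rcases lt_trichotomy A B with h | h | h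
        · simp only [if_pos h, if_neg (lt_asymm h)]; try ring
        · simp only [h, lt_self_iff_false, if_false]; try norm_num
        · simp only [if_pos h, if_neg (lt_asymm h)]; try ring
      rw [camY_succ, camY_succ, ih, hprob]
      by_cases hk : k = 0
      · subst hk; funext j; simp; ring
      · have hne := hbad k (Nat.one_le_iff_ne_zero.mpr hk)
        rw [if_neg hk, if_neg hk]
        funext j
        rcases lt_or_gt_of_ne hne with h | h
        · have h1 : ¬ (1 - u k < 1 - camProb p q Minv x u s₀ k) := by push_neg; linarith
          rw [if_pos h, if_neg (show ¬ (flipU u k < 1 - camProb p q Minv x u s₀ k) from h1)]; ring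
        · have h1 : (1 - u k < 1 - camProb p q Minv x u s₀ k) := by linarith
          have h2 : ¬ (u k < camProb p q Minv x u s₀ k) := by push_neg; linarith
          rw [if_pos (show flipU u k < 1 - camProb p q Minv x u s₀ k from h1), if_neg h2]; ring

lemma camProb_flip (x : ℕ → Fin p → ℝ) (u : ℕ → ℝ) (s₀ : ℝ)
    (hbad : ∀ k, 1 ≤ k → u k ≠ camProb p q Minv x u s₀ k) (k : ℕ) :
    camProb p q Minv x (flipU u) (-s₀) k = 1 - camProb p q Minv x u s₀ k := by
  unfold camProb
  rw [camY_flip p q Minv x u s₀ hbad k]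
  have h1 : (fun j => -camY p q Minv x u s₀ k j + (x (2*k) j - x (2*k+1) j))
      = fun j => -(camY p q Minv x u s₀ k j - (x (2*k) j - x (2*k+1) j)) := by
    funext j; ring
  have h2 : (fun j => -camY p q Minv x u s₀ k j - (x (2*k) j - x (2*k+1) j))
      = fun j => -(camY p q Minv x u s₀ k j + (x (2*k) j - x (2*k+1) j)) := by
    funext j; ring
  simp only [h1, h2, camMval_neg]
  set A := camMval p Minv (k+1) (fun j => camY p q Minv x u s₀ k j + (x (2*k) j - x (2*k+1) j))
  set B := camMval p Minv (k+1) (fun j => camY p q Minv x u s₀ k j - (x (2*k) j - x (2*k+1) j))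
  rcases lt_trichotomy A B with h | h | h
  · simp only [if_pos h, if_neg (lt_asymm h)]; try ring
  · simp only [h, lt_self_iff_false, if_false]; try norm_num
  · simp only [if_pos h, if_neg (lt_asymm h)]; try ring

lemma camSign_flip (x : ℕ → Fin p → ℝ) (u : ℕ → ℝ) (s₀ : ℝ)
    (hbad : ∀ k, 1 ≤ k → u k ≠ camProb p q Minv x u s₀ k) (k : ℕ) :
    camSign p q Minv x (flipU u) (-s₀) k = -(camSign p q Minv x u s₀ k) := by
  rw [camSign_eq, camSign_eq]
  by_cases hk : k = 0
  · simp [hk]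
  · rw [if_neg hk, if_neg hk, camProb_flip p q Minv x u s₀ hbad k]
    have hne := hbad k (Nat.one_le_iff_ne_zero.mpr hk)
    rcases lt_or_gt_of_ne hne with h | h
    · have h1 : ¬ (1 - u k < 1 - camProb p q Minv x u s₀ k) := by push_neg; linarith
      rw [if_pos h, if_neg (show ¬ (flipU u k < 1 - camProb p q Minv x u s₀ k) from h1)]; try ring
    · have h1 : (1 - u k < 1 - camProb p q Minv x u s₀ k) := by linarith
      have h2 : ¬ (u k < camProb p q Minv x u s₀ k) := by push_neg; linarith
      rw [if_pos (show flipU u k < 1 - camProb p q Minv x u s₀ k from h1), if_neg h2]; try norm_num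

lemma camSign_mem (x : ℕ → Fin p → ℝ) (u : ℕ → ℝ) (s₀ : ℝ) (hs : s₀ = 1 ∨ s₀ = -1) (k : ℕ) :
    camSign p q Minv x u s₀ k = 1 ∨ camSign p q Minv x u s₀ k = -1 := by
  rw [camSign_eq]
  by_cases hk : k = 0
  · simpa [hk] using hs
  · rw [if_neg hk]
    by_cases h : u k < camProb p q Minv x u s₀ k
    · left; rw [if_pos h]
    · right; rw [if_neg h]

lemma camT_flip (x : ℕ → Fin p → ℝ) (u : ℕ → ℝ) (s₀ : ℝ) (hs : s₀ = 1 ∨ s₀ = -1)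
    (hbad : ∀ k, 1 ≤ k → u k ≠ camProb p q Minv x u s₀ k) (i : ℕ) :
    camT p q Minv x (flipU u) (-s₀) i = 1 - camT p q Minv x u s₀ i := by
  unfold camT
  rw [camSign_flip p q Minv x u s₀ hbad]
  rcases camSign_mem p q Minv x u s₀ hs (i / 2) with h | h <;>
    rcases Nat.mod_two_eq_zero_or_one i with h2 | h2 <;>
      simp [h, h2] <;> norm_num

lemma symSign_mem (u : ℕ → ℝ) : symSign u = 1 ∨ symSign u = -1 := by
  unfold symSign
  by_cases h : u 0 < 1/2
  · left; rw [if_pos h]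
  · right; rw [if_neg h]

lemma symSign_flip (u : ℕ → ℝ) (h0 : u 0 ≠ 1 / 2) : symSign (flipU u) = -(symSign u) := by
  unfold symSign
  rcases lt_or_gt_of_ne h0 with h | h
  · have h1 : ¬ (1 - u 0 < 1 / 2) := by push_neg; linarith
    rw [if_pos h, if_neg (show ¬ (flipU u 0 < 1 / 2) from h1)]
  · have h1 : (1 - u 0 < 1 / 2) := by linarith
    have h2 : ¬ (u 0 < 1 / 2) := by push_neg; linarith
    rw [if_pos (show flipU u 0 < 1 / 2 from h1), if_neg h2]; norm_num


lemma camProb_def (x : ℕ → Fin p → ℝ) (u : ℕ → ℝ) (s₀ : ℝ) (k : ℕ) :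
    camProb p q Minv x u s₀ k =
      if camMval p Minv (k + 1)
          (fun j => camY p q Minv x u s₀ k j + (x (2 * k) j - x (2 * k + 1) j)) <
        camMval p Minv (k + 1)
          (fun j => camY p q Minv x u s₀ k j - (x (2 * k) j - x (2 * k + 1) j)) then q
      else if camMval p Minv (k + 1)
          (fun j => camY p q Minv x u s₀ k j - (x (2 * k) j - x (2 * k + 1) j)) <
        camMval p Minv (k + 1)
          (fun j => camY p q Minv x u s₀ k j + (x (2 * k) j - x (2 * k + 1) j)) then 1 - q
      else 1 / 2 := rfl

lemma camY_congr (x : ℕ → Fin p → ℝ) (u u' : ℕ → ℝ) (s₀ : ℝ) :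
    ∀ k, (∀ j, j < k → u j = u' j) → camY p q Minv x u s₀ k = camY p q Minv x u' s₀ k := by
  intro k
  induction k with
  | zero => intro _; rfl
  | succ k ih =>
      intro h
      have ih' := ih (fun j hj => h j (Nat.lt_succ_of_lt hj))
      rw [camY_succ, camY_succ, ih']
      by_cases hk : k = 0
      · simp [hk]
      · have hcp : camProb p q Minv x u s₀ k = camProb p q Minv x u' s₀ k := by
          rw [camProb_def, camProb_def, ih']
        rw [if_neg hk, if_neg hk, hcp, h k (Nat.lt_succ_self k)]

lemma camProb_congr (x : ℕ → Fin p → ℝ) (u u' : ℕ → ℝ) (s₀ : ℝ) (k : ℕ)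
    (h : ∀ j, j < k → u j = u' j) :
    camProb p q Minv x u s₀ k = camProb p q Minv x u' s₀ k := by
  rw [camProb_def, camProb_def, camY_congr p q Minv x u u' s₀ k h]

lemma measurable_camMval (m : ℕ) : Measurable (camMval p Minv m) := by
  unfold camMval Matrix.mulVec dotProduct
  measurability

section Meas

variable {Ω' : Type*} [MeasurableSpace Ω'] {X : Ω' → ℕ → Fin p → ℝ}
  {U : Ω' → ℕ → ℝ} {S : Ω' → ℝ}

lemma measurable_camY (hX : Measurable X) (hU : Measurable U) (hS : Measurable S) (k : ℕ) :
    Measurable (fun ω => camY p q Minv (X ω) (U ω) (S ω) k) := by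
  have hXe : ∀ i (j : Fin p), Measurable fun ω => X ω i j := fun i j =>
    (measurable_pi_apply j).comp ((measurable_pi_apply i).comp hX)
  have hUe : ∀ i, Measurable fun ω => U ω i := fun i => (measurable_pi_apply i).comp hU
  induction k with
  | zero => exact measurable_const
  | succ k ih =>
      have hy : ∀ j : Fin p, Measurable fun ω => camY p q Minv (X ω) (U ω) (S ω) k j :=
        fun j => (measurable_pi_apply j).comp ih
      have hM1 : Measurable fun ω => camMval p Minv (k + 1)
          (fun j => camY p q Minv (X ω) (U ω) (S ω) k j + (X ω (2*k) j - X ω (2*k+1) j)) :=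
        (measurable_camMval p Minv (k+1)).comp (measurable_pi_lambda _
          (fun j => (hy j).add ((hXe (2*k) j).sub (hXe (2*k+1) j))))
      have hM2 : Measurable fun ω => camMval p Minv (k + 1)
          (fun j => camY p q Minv (X ω) (U ω) (S ω) k j - (X ω (2*k) j - X ω (2*k+1) j)) :=
        (measurable_camMval p Minv (k+1)).comp (measurable_pi_lambda _
          (fun j => (hy j).sub ((hXe (2*k) j).sub (hXe (2*k+1) j))))
      have hprob : Measurable fun ω => camProb p q Minv (X ω) (U ω) (S ω) k := by
        simp only [camProb_def]
        exact Measurable.ite (measurableSet_lt hM1 hM2) measurable_const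
          (Measurable.ite (measurableSet_lt hM2 hM1) measurable_const measurable_const)
      have hs : Measurable fun ω =>
          (if k = 0 then S ω else
            if U ω k < camProb p q Minv (X ω) (U ω) (S ω) k then (1:ℝ) else -1) := by
        by_cases hk : k = 0
        · simpa [hk] using hS
        · simp only [hk, if_false]
          exact Measurable.ite (measurableSet_lt (hUe k) hprob) measurable_const
            measurable_const
      simp only [camY_succ]
      exact measurable_pi_lambda _
        (fun j => (hy j).add (hs.mul ((hXe (2*k) j).sub (hXe (2*k+1) j))))

lemma measurable_camProb (hX : Measurable X) (hU : Measurable U) (hS : Measurable S) (k : ℕ) :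
    Measurable (fun ω => camProb p q Minv (X ω) (U ω) (S ω) k) := by
  have hXe : ∀ i (j : Fin p), Measurable fun ω => X ω i j := fun i j =>
    (measurable_pi_apply j).comp ((measurable_pi_apply i).comp hX)
  have hy : ∀ j : Fin p, Measurable fun ω => camY p q Minv (X ω) (U ω) (S ω) k j :=
    fun j => (measurable_pi_apply j).comp (measurable_camY p q Minv hX hU hS k)
  have hM1 : Measurable fun ω => camMval p Minv (k + 1)
      (fun j => camY p q Minv (X ω) (U ω) (S ω) k j + (X ω (2*k) j - X ω (2*k+1) j)) :=
    (measurable_camMval p Minv (k+1)).comp (measurable_pi_lambda _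
      (fun j => (hy j).add ((hXe (2*k) j).sub (hXe (2*k+1) j))))
  have hM2 : Measurable fun ω => camMval p Minv (k + 1)
      (fun j => camY p q Minv (X ω) (U ω) (S ω) k j - (X ω (2*k) j - X ω (2*k+1) j)) :=
    (measurable_camMval p Minv (k+1)).comp (measurable_pi_lambda _
      (fun j => (hy j).sub ((hXe (2*k) j).sub (hXe (2*k+1) j))))
  simp only [camProb_def]
  exact Measurable.ite (measurableSet_lt hM1 hM2) measurable_const
    (Measurable.ite (measurableSet_lt hM2 hM1) measurable_const measurable_const)

lemma measurable_camSign (hX : Measurable X) (hU : Measurable U) (hS : Measurable S) (k : ℕ) :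
    Measurable (fun ω => camSign p q Minv (X ω) (U ω) (S ω) k) := by
  have hUe : ∀ i, Measurable fun ω => U ω i := fun i => (measurable_pi_apply i).comp hU
  simp only [camSign_eq]
  by_cases hk : k = 0
  · simpa [hk] using hS
  · simp only [hk, if_false]
    exact Measurable.ite
      (measurableSet_lt (hUe k) (measurable_camProb p q Minv hX hU hS k))
      measurable_const measurable_const

lemma measurable_camT (hX : Measurable X) (hU : Measurable U) (hS : Measurable S) (i : ℕ) :
    Measurable (fun ω => camT p q Minv (X ω) (U ω) (S ω) i) := by
  unfold camT
  have h1 : MeasurableSet {ω | camSign p q Minv (X ω) (U ω) (S ω) (i / 2) = 1} :=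
    (measurable_camSign p q Minv hX hU hS (i / 2)) (measurableSet_singleton 1)
  exact Measurable.ite h1 measurable_const measurable_const

lemma measurable_symSign : Measurable symSign := by
  unfold symSign
  exact Measurable.ite (measurableSet_lt (measurable_pi_apply 0) measurable_const)
    measurable_const measurable_const

end Meas

section MeasureLemmas

abbrev unif : Measure ℝ := volume.restrict (Set.Ioo (0:ℝ) 1)

lemma unif_prob : IsProbabilityMeasure unif := by
  constructor
  rw [Measure.restrict_apply_univ, Real.volume_Ioo]
  norm_num

lemma unif_singleton (a : ℝ) : unif {a} = 0 := by
  rw [Measure.restrict_apply (measurableSet_singleton a)]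
  refine le_antisymm (le_trans (measure_mono Set.inter_subset_left) ?_) (by simp)
  rw [Real.volume_singleton]

lemma map_oneSub_unif : Measure.map (fun t : ℝ => 1 - t) unif = unif := by
  have hmp : MeasurePreserving (fun t : ℝ => 1 - t) volume volume :=
    Measure.measurePreserving_sub_left volume 1
  have hpre : (fun t : ℝ => 1 - t) ⁻¹' (Set.Ioo 0 1) = Set.Ioo 0 1 := by
    ext t
    simp only [Set.mem_preimage, Set.mem_Ioo]
    constructor <;> exact fun h => ⟨by linarith [h.1, h.2], by linarith [h.1, h.2]⟩
  have h := (hmp.restrict_preimage (s := Set.Ioo (0:ℝ) 1) measurableSet_Ioo).map_eq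
  rwa [hpre] at h

variable {Ω : Type*} [MeasurableSpace Ω] {P : Measure Ω} [IsProbabilityMeasure P]

lemma law_fin {v : Ω → ℕ → ℝ} (hv : Measurable v)
    (hind : iIndepFun (fun k ω => v ω k) P)
    (hlaw : ∀ k, Measure.map (fun ω => v ω k) P = unif) (t : Finset ℕ) :
    Measure.map (fun ω => t.restrict (v ω)) P = Measure.pi (fun _ => unif) := by
  haveI := unif_prob
  refine (Measure.pi_eq fun s hs => ?_).symm
  have hmeas : Measurable fun ω => t.restrict (v ω) := (t.measurable_restrict).comp hv
  rw [Measure.map_apply hmeas (MeasurableSet.univ_pi hs)]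
  classical
  set s' : ℕ → Set ℝ := fun i => if h : i ∈ t then s ⟨i, h⟩ else Set.univ with hs'
  have hmeas_s' : ∀ i, MeasurableSet (s' i) := by
    intro i
    by_cases h : i ∈ t
    · simp only [hs', dif_pos h]; exact hs ⟨i, h⟩
    · simp only [hs', dif_neg h]; exact MeasurableSet.univ
  have hset : (fun ω => t.restrict (v ω)) ⁻¹' (Set.pi Set.univ s)
      = ⋂ i ∈ t, (fun ω => v ω i) ⁻¹' (s' i) := by
    ext ω
    simp only [Set.mem_preimage, Set.mem_pi, Set.mem_univ, forall_true_left, Set.mem_iInter]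
    constructor
    · intro h i hi
      simp only [Set.mem_preimage, hs', dif_pos hi]
      exact h ⟨i, hi⟩
    · intro h i
      have := h i.1 i.2
      simp only [hs', dif_pos i.2] at this
      exact this
  rw [hset, hind.meas_biInter (fun i hi => ⟨s' i, hmeas_s' i, rfl⟩)]
  have hPi : ∀ i ∈ t, P ((fun ω => v ω i) ⁻¹' (s' i)) = unif (s' i) := by
    intro i _
    have hm : Measurable fun ω => v ω i := (measurable_pi_apply i).comp hv
    rw [← hlaw i, Measure.map_apply hm (hmeas_s' i)]
  rw [Finset.prod_congr rfl hPi, ← Finset.prod_coe_sort t (fun i => unif (s' i))]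
  exact Finset.prod_congr rfl (fun i _ => by simp only [hs', dif_pos i.2])

lemma law_eq {v w : Ω → ℕ → ℝ} (hv : Measurable v) (hw : Measurable w)
    (hindv : iIndepFun (fun k ω => v ω k) P)
    (hindw : iIndepFun (fun k ω => w ω k) P)
    (hlawv : ∀ k, Measure.map (fun ω => v ω k) P = unif)
    (hlaww : ∀ k, Measure.map (fun ω => w ω k) P = unif) :
    Measure.map v P = Measure.map w P := by
  haveI : IsProbabilityMeasure (Measure.map v P) := Measure.isProbabilityMeasure_map hv.aemeasurable
  haveI : IsProbabilityMeasure (Measure.map w P) := Measure.isProbabilityMeasure_map hw.aemeasurable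
  refine ext_of_generate_finite (measurableCylinders (fun _ : ℕ => ℝ))
    generateFrom_measurableCylinders.symm isPiSystem_measurableCylinders (fun A hA => ?_)
    (by simp)
  obtain ⟨t, S, hS, rfl⟩ := (mem_measurableCylinders _).mp hA
  have hcyl : MeasurableSet (cylinder t S) := (Finset.measurable_restrict (X := fun _ : ℕ => ℝ) t) hS
  rw [Measure.map_apply hv hcyl, Measure.map_apply hw hcyl]
  have h1 : v ⁻¹' (cylinder t S) = (fun ω => t.restrict (v ω)) ⁻¹' S := rfl
  have h2 : w ⁻¹' (cylinder t S) = (fun ω => t.restrict (w ω)) ⁻¹' S := rfl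
  have hrv : Measurable fun ω => t.restrict (v ω) := (Finset.measurable_restrict t).comp hv
  have hrw : Measurable fun ω => t.restrict (w ω) := (Finset.measurable_restrict t).comp hw
  rw [h1, h2, ← Measure.map_apply hrv hS, ← Measure.map_apply hrw hS,
    law_fin hv hindv hlawv t, law_fin hw hindw hlaww t]

lemma indep_eq_zero {X Y : Ω → ℝ} (hX : Measurable X) (hY : Measurable Y)
    (hind : IndepFun X Y P) (hlaw : Measure.map Y P = unif) :
    P {ω | Y ω = X ω} = 0 := by
  have hD : MeasurableSet {z : ℝ × ℝ | z.2 = z.1} :=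
    measurableSet_eq_fun measurable_snd measurable_fst
  have hpre : {ω | Y ω = X ω} = (fun ω => (X ω, Y ω)) ⁻¹' {z : ℝ × ℝ | z.2 = z.1} := rfl
  rw [hpre, ← Measure.map_apply (hX.prodMk hY) hD,
    (indepFun_iff_map_prod_eq_prod_map_map hX.aemeasurable hY.aemeasurable).mp hind, hlaw,
    Measure.prod_apply hD]
  have hfib : ∀ a : ℝ, (Prod.mk a ⁻¹' {z : ℝ × ℝ | z.2 = z.1}) = {a} := by
    intro a; ext b; simp [eq_comm]
  simp only [hfib, unif_singleton, lintegral_const, zero_mul]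

end MeasureLemmas

section InnerZero

variable {Ωx : Type*}

lemma indep_restrict_eval (μu : Measure (ℕ → ℝ)) [IsProbabilityMeasure μu] (k : ℕ)
    (hevind : iIndepFun (fun i (b : ℕ → ℝ) => b i) μu) :
    IndepFun (fun b : ℕ → ℝ => (fun j : Fin k => b j)) (fun b : ℕ → ℝ => b k) μu := by
  have hdisj : Disjoint (Finset.range k) ({k} : Finset ℕ) := by
    simp only [Finset.disjoint_left, Finset.mem_range, Finset.mem_singleton]; omega
  have hbase := hevind.indepFun_finset (Finset.range k) ({k} : Finset ℕ) hdisj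
    (fun i => measurable_pi_apply i)
  have hρ : Measurable (fun w : ↥(Finset.range k) → ℝ =>
      (fun j : Fin k => w ⟨(j : ℕ), Finset.mem_range.mpr j.2⟩)) :=
    measurable_pi_lambda _ (fun j => measurable_pi_apply _)
  have hε : Measurable (fun w : ↥({k} : Finset ℕ) → ℝ =>
      w ⟨k, Finset.mem_singleton_self k⟩) := measurable_pi_apply _
  have h := hbase.comp hρ hε
  exact h

lemma inner_zero (p : ℕ) (q : ℝ) (Minv : Matrix (Fin p) (Fin p) ℝ)
    {k : ℕ} (hk : 1 ≤ k) (μu : Measure (ℕ → ℝ)) [IsProbabilityMeasure μu]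
    (hevind : iIndepFun (fun i (b : ℕ → ℝ) => b i) μu)
    (hlawk : Measure.map (fun b : ℕ → ℝ => b k) μu = unif)
    (a : ℕ → Fin p → ℝ) :
    μu {b : ℕ → ℝ | b k = camProb p q Minv a b (symSign b) k} = 0 := by
  classical
  have hext : Measurable (fun w : Fin k → ℝ =>
      (fun j => if h : j < k then w ⟨j, h⟩ else 0 : ℕ → ℝ)) := by
    refine measurable_pi_lambda _ (fun j => ?_)
    by_cases h : j < k
    · simp only [dif_pos h]; exact measurable_pi_apply _
    · simp only [dif_neg h]; exact measurable_const
  have hGm : Measurable (fun w : Fin k → ℝ =>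
      camProb p q Minv a (fun j => if h : j < k then w ⟨j, h⟩ else 0)
        (symSign (fun j => if h : j < k then w ⟨j, h⟩ else 0)) k) :=
    measurable_camProb p q Minv measurable_const hext (measurable_symSign.comp hext) k
  have hGb : ∀ b : ℕ → ℝ,
      camProb p q Minv a b (symSign b) k
        = camProb p q Minv a (fun j => if h : j < k then b j else 0)
            (symSign (fun j => if h : j < k then b j else 0)) k := by
    intro b
    have hcoord : ∀ j, j < k → b j = (fun j => if h : j < k then b j else 0) j := by
      intro j hj; simp only [dif_pos hj]
    have hsym : symSign b = symSign (fun j => if h : j < k then b j else 0) := by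
      unfold symSign
      rw [← hcoord 0 (by omega)]
    rw [hsym]
    exact camProb_congr p q Minv a _ _ _ k hcoord
  have hsetb : {b : ℕ → ℝ | b k = camProb p q Minv a b (symSign b) k}
      = {b : ℕ → ℝ | b k =
          (fun w : Fin k → ℝ =>
            camProb p q Minv a (fun j => if h : j < k then w ⟨j, h⟩ else 0)
              (symSign (fun j => if h : j < k then w ⟨j, h⟩ else 0)) k)
            (fun j : Fin k => b j)} := by
    ext b
    simp only [Set.mem_setOf_eq]
    rw [hGb b]
  rw [hsetb]
  have hindp := indep_restrict_eval μu k hevind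
  have hGind := hindp.comp hGm measurable_id
  have hevk : Measurable (fun b : ℕ → ℝ => b k) := measurable_pi_apply k
  have hrest : Measurable (fun b : ℕ → ℝ => (fun j : Fin k => b j)) :=
    measurable_pi_lambda _ (fun j => measurable_pi_apply _)
  have hevGm := hGm.comp hrest
  exact indep_eq_zero hevGm hevk hGind hlawk

end InnerZero

end CamAux
end CamAux

noncomputable section

set_option maxHeartbeats 1600000 in
/-- **Exchangeability of CAM allocations.**  Under the CAM procedure with the symmetric
first-pair convention (coins i.i.d. uniform on (0,1), independent of the covariates),
conditionally on the covariates `x₁,…,xₙ` the allocation vector `(T₁,…,Tₙ)` and its complement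
`(1-T₁,…,1-Tₙ)` have the same distribution — formalized as equality of the joint laws of
`((x₁,…,xₙ), (T₁,…,Tₙ))` and `((x₁,…,xₙ), (1-T₁,…,1-Tₙ))` — and consequently
`P(Tᵢ = 1 | x₁,…,xₙ) = 1/2` for every unit `i`. -/
theorem camT_complement_same_distribution
    {Ω : Type*} [MeasurableSpace Ω] (P : Measure Ω) [IsProbabilityMeasure P]
    (p : ℕ) (q : ℝ) (hq : q ∈ Set.Ioo (1 / 2 : ℝ) 1)
    (Minv : Matrix (Fin p) (Fin p) ℝ)
    (x : Ω → ℕ → Fin p → ℝ) (u : Ω → ℕ → ℝ)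
    (hx : Measurable x) (hu : Measurable u)
    (huind : iIndepFun (fun k ω => u ω k) P)
    (hulaw : ∀ k : ℕ, Measure.map (fun ω => u ω k) P = volume.restrict (Set.Ioo (0 : ℝ) 1))
    (hxu : IndepFun x u P)
    (n : ℕ) (hn : 2 ≤ n)
    (T : Ω → ℕ → ℝ)
    (hT : T = fun ω => camT p q Minv (x ω) (u ω) (symSign (u ω))) :
    Measure.map
        (fun ω => ((fun i : Fin n => x ω i), (fun i : Fin n => T ω i))) P
      = Measure.map
        (fun ω => ((fun i : Fin n => x ω i), (fun i : Fin n => 1 - T ω i))) P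
    ∧ ∀ i : Fin n,
        P[fun ω => T ω i |
            MeasurableSpace.comap (fun ω (i : Fin n) => x ω i) inferInstance]
          =ᵐ[P] fun _ => 1 / 2 := by
  classical
  subst hT
  -- basic measurability
  have hflipm : Measurable CamAux.flipU :=
    measurable_pi_lambda _ (fun k => measurable_const.sub (measurable_pi_apply k))
  have hv : Measurable (fun ω => CamAux.flipU (u ω)) := hflipm.comp hu
  have hsymm : Measurable symSign := CamAux.measurable_symSign
  have hS : Measurable (fun ω => symSign (u ω)) := hsymm.comp hu
  -- flipped coins are iid uniform
  have hvind : iIndepFun (fun k ω => CamAux.flipU (u ω) k) P :=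
    huind.comp (fun _ => fun t : ℝ => 1 - t) (fun _ => measurable_const.sub measurable_id)
  have hvlaw : ∀ k, Measure.map (fun ω => CamAux.flipU (u ω) k) P = CamAux.unif := by
    intro k
    have h1 : (fun ω => CamAux.flipU (u ω) k) = (fun t : ℝ => 1 - t) ∘ (fun ω => u ω k) := rfl
    have hg1 : Measurable (fun t : ℝ => 1 - t) := measurable_const.sub measurable_id
    have hek : Measurable (fun ω => u ω k) := (measurable_pi_apply k).comp hu
    rw [h1, ← Measure.map_map hg1 hek, hulaw k]
    exact CamAux.map_oneSub_unif
  have hlaweq : Measure.map (fun ω => CamAux.flipU (u ω)) P = Measure.map u P :=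
    CamAux.law_eq hv hu hvind huind hvlaw hulaw
  have hxv : IndepFun x (fun ω => CamAux.flipU (u ω)) P :=
    hxu.comp measurable_id hflipm
  have hjoint : Measure.map (fun ω => (x ω, CamAux.flipU (u ω))) P
      = Measure.map (fun ω => (x ω, u ω)) P := by
    rw [(indepFun_iff_map_prod_eq_prod_map_map hx.aemeasurable hv.aemeasurable).mp hxv,
      (indepFun_iff_map_prod_eq_prod_map_map hx.aemeasurable hu.aemeasurable).mp hxu, hlaweq]
  -- null sets
  have hbad0 : P {ω | u ω 0 = 1 / 2} = 0 := by
    have hm : Measurable fun ω => u ω 0 := (measurable_pi_apply 0).comp hu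
    have hset : {ω | u ω 0 = 1 / 2} = (fun ω => u ω 0) ⁻¹' {(1 : ℝ) / 2} := rfl
    rw [hset, ← Measure.map_apply hm (measurableSet_singleton _), hulaw 0]
    exact CamAux.unif_singleton _
  have hbadk : ∀ k, 1 ≤ k →
      P {ω | u ω k = CamAux.camProb p q Minv (x ω) (u ω) (symSign (u ω)) k} = 0 := by
    intro k hk
    set μx : Measure (ℕ → Fin p → ℝ) := Measure.map x P with hμx
    set μu := Measure.map u P with hμu
    haveI : IsProbabilityMeasure μu := Measure.isProbabilityMeasure_map hu.aemeasurable
    haveI : IsProbabilityMeasure μx := Measure.isProbabilityMeasure_map hx.aemeasurable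
    have hprod : Measure.map (fun ω => (x ω, u ω)) P = μx.prod μu :=
      (indepFun_iff_map_prod_eq_prod_map_map hx.aemeasurable hu.aemeasurable).mp hxu
    have hg : Measurable (fun z : (ℕ → Fin p → ℝ) × (ℕ → ℝ) =>
        CamAux.camProb p q Minv z.1 z.2 (symSign z.2) k) :=
      CamAux.measurable_camProb p q Minv measurable_fst measurable_snd
        (hsymm.comp measurable_snd) k
    have hek : Measurable (fun z : (ℕ → Fin p → ℝ) × (ℕ → ℝ) => z.2 k) :=
      (measurable_pi_apply k).comp measurable_snd
    have hA : MeasurableSet {z : (ℕ → Fin p → ℝ) × (ℕ → ℝ) |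
        z.2 k = CamAux.camProb p q Minv z.1 z.2 (symSign z.2) k} :=
      measurableSet_eq_fun hek hg
    have hpre : {ω | u ω k = CamAux.camProb p q Minv (x ω) (u ω) (symSign (u ω)) k}
        = (fun ω => (x ω, u ω)) ⁻¹' {z : (ℕ → Fin p → ℝ) × (ℕ → ℝ) |
            z.2 k = CamAux.camProb p q Minv z.1 z.2 (symSign z.2) k} := rfl
    rw [hpre, ← Measure.map_apply (hx.prodMk hu) hA, hprod, Measure.prod_apply hA]
    -- the evaluations are iid uniform under μu
    have hevind : iIndepFun (fun i (b : ℕ → ℝ) => b i) μu := by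
      rw [iIndepFun_iff_measure_inter_preimage_eq_mul]
      intro S sets hsets
      have hpre2 : ∀ i, (fun b : ℕ → ℝ => b i) ⁻¹' sets i
          = (fun b : ℕ → ℝ => b i) ⁻¹' sets i := fun _ => rfl
      have hmeas : ∀ i ∈ S, MeasurableSet ((fun b : ℕ → ℝ => b i) ⁻¹' sets i) :=
        fun i hi => (measurable_pi_apply i) (hsets i hi)
      have e1 : μu (⋂ i ∈ S, (fun b : ℕ → ℝ => b i) ⁻¹' sets i)
          = P (⋂ i ∈ S, (fun ω => u ω i) ⁻¹' sets i) := by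
        rw [hμu, Measure.map_apply hu (Finset.measurableSet_biInter S hmeas)]
        congr 1
        ext ω
        simp [Set.mem_iInter]
      have e2 : ∀ i ∈ S, μu ((fun b : ℕ → ℝ => b i) ⁻¹' sets i)
          = P ((fun ω => u ω i) ⁻¹' sets i) := by
        intro i hi
        rw [hμu, Measure.map_apply hu ((measurable_pi_apply i) (hsets i hi))]
        rfl
      rw [e1, Finset.prod_congr rfl e2]
      exact huind.measure_inter_preimage_eq_mul S hsets
    -- inner measure is zero for every a
    have hlawk : Measure.map (fun b : ℕ → ℝ => b k) μu = CamAux.unif := by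
      rw [hμu, Measure.map_map (measurable_pi_apply k) hu]
      exact hulaw k
    have hinner : ∀ a : ℕ → Fin p → ℝ, μu (Prod.mk a ⁻¹' {z : (ℕ → Fin p → ℝ) × (ℕ → ℝ) |
        z.2 k = CamAux.camProb p q Minv z.1 z.2 (symSign z.2) k}) = 0 := by
      intro a
      have hfib : Prod.mk a ⁻¹' {z : (ℕ → Fin p → ℝ) × (ℕ → ℝ) |
          z.2 k = CamAux.camProb p q Minv z.1 z.2 (symSign z.2) k}
          = {b : ℕ → ℝ | b k = CamAux.camProb p q Minv a b (symSign b) k} := rfl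
      rw [hfib]
      exact CamAux.inner_zero p q Minv hk μu hevind hlawk a
    have : ∀ a : ℕ → Fin p → ℝ, (fun a => μu (Prod.mk a ⁻¹' {z : (ℕ → Fin p → ℝ) × (ℕ → ℝ) |
        z.2 k = CamAux.camProb p q Minv z.1 z.2 (symSign z.2) k})) a = 0 := hinner
    rw [lintegral_congr this, lintegral_zero]
  -- a.e. goodness of coins
  have hgood : ∀ᵐ ω ∂P, (u ω 0 ≠ 1 / 2 ∧ ∀ k, 1 ≤ k →
      u ω k ≠ CamAux.camProb p q Minv (x ω) (u ω) (symSign (u ω)) k) := by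
    have h1 : ∀ᵐ ω ∂P, u ω 0 ≠ 1 / 2 := measure_eq_zero_iff_ae_notMem.mp hbad0
    have h2 : ∀ᵐ ω ∂P, ∀ k, 1 ≤ k →
        u ω k ≠ CamAux.camProb p q Minv (x ω) (u ω) (symSign (u ω)) k := by
      rw [ae_all_iff]
      intro k
      by_cases hk : 1 ≤ k
      · exact (measure_eq_zero_iff_ae_notMem.mp (hbadk k hk)).mono (fun ω h _ => h)
      · exact ae_of_all _ (fun ω hk' => absurd hk' hk)
    exact h1.and h2
  -- a.e. flip identity
  have haeT : ∀ᵐ ω ∂P,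
      (fun i : Fin n => camT p q Minv (x ω) (CamAux.flipU (u ω))
          (symSign (CamAux.flipU (u ω))) (i : ℕ))
        = fun i : Fin n => 1 - camT p q Minv (x ω) (u ω) (symSign (u ω)) (i : ℕ) := by
    refine hgood.mono (fun ω h => ?_)
    funext i
    rw [CamAux.symSign_flip (u ω) h.1]
    exact CamAux.camT_flip p q Minv (x ω) (u ω) (symSign (u ω))
      (CamAux.symSign_mem (u ω)) h.2 (i : ℕ)
  -- part 1
  have hΦ : Measurable (fun z : (ℕ → Fin p → ℝ) × (ℕ → ℝ) =>
      ((fun i : Fin n => z.1 (i : ℕ)),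
        (fun i : Fin n => camT p q Minv z.1 z.2 (symSign z.2) (i : ℕ)))) := by
    refine Measurable.prodMk ?_ ?_
    · exact measurable_pi_lambda _ (fun i => (measurable_pi_apply _).comp measurable_fst)
    · exact measurable_pi_lambda _ (fun i =>
        CamAux.measurable_camT p q Minv measurable_fst measurable_snd
          (hsymm.comp measurable_snd) (i : ℕ))
  have hpm1 : Measurable (fun ω => ((fun i : Fin n => x ω (i : ℕ)),
      (fun i : Fin n => camT p q Minv (x ω) (u ω) (symSign (u ω)) (i : ℕ)))) :=
    hΦ.comp (hx.prodMk hu)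
  have hTm : ∀ j : ℕ, Measurable (fun ω => camT p q Minv (x ω) (u ω) (symSign (u ω)) j) :=
    fun j => CamAux.measurable_camT p q Minv hx hu hS j
  have hxfin : Measurable (fun ω => (fun i : Fin n => x ω (i : ℕ))) :=
    measurable_pi_lambda _ (fun i => (measurable_pi_apply (i : ℕ)).comp hx)
  have hpm2 : Measurable (fun ω => ((fun i : Fin n => x ω (i : ℕ)),
      (fun i : Fin n => 1 - camT p q Minv (x ω) (u ω) (symSign (u ω)) (i : ℕ)))) :=
    hxfin.prodMk (measurable_pi_lambda _ (fun i => measurable_const.sub (hTm (i : ℕ))))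
  have hmap1 : Measure.map (fun ω => ((fun i : Fin n => x ω (i : ℕ)),
      (fun i : Fin n => camT p q Minv (x ω) (u ω) (symSign (u ω)) (i : ℕ)))) P
      = Measure.map (fun ω => ((fun i : Fin n => x ω (i : ℕ)),
        (fun i : Fin n => 1 - camT p q Minv (x ω) (u ω) (symSign (u ω)) (i : ℕ)))) P := by
    have e1 : Measure.map (fun ω => ((fun i : Fin n => x ω (i : ℕ)),
        (fun i : Fin n => camT p q Minv (x ω) (u ω) (symSign (u ω)) (i : ℕ)))) P
        = Measure.map (fun z : (ℕ → Fin p → ℝ) × (ℕ → ℝ) =>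
            ((fun i : Fin n => z.1 (i : ℕ)),
              (fun i : Fin n => camT p q Minv z.1 z.2 (symSign z.2) (i : ℕ))))
          (Measure.map (fun ω => (x ω, u ω)) P) :=
      (Measure.map_map hΦ (hx.prodMk hu)).symm
    have e2 : Measure.map (fun z : (ℕ → Fin p → ℝ) × (ℕ → ℝ) =>
          ((fun i : Fin n => z.1 (i : ℕ)),
            (fun i : Fin n => camT p q Minv z.1 z.2 (symSign z.2) (i : ℕ))))
        (Measure.map (fun ω => (x ω, CamAux.flipU (u ω))) P)
        = Measure.map (fun ω => ((fun i : Fin n => x ω (i : ℕ)),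
            (fun i : Fin n => camT p q Minv (x ω) (CamAux.flipU (u ω))
              (symSign (CamAux.flipU (u ω))) (i : ℕ)))) P :=
      Measure.map_map hΦ (hx.prodMk hv)
    have e3 : Measure.map (fun ω => ((fun i : Fin n => x ω (i : ℕ)),
        (fun i : Fin n => camT p q Minv (x ω) (CamAux.flipU (u ω))
          (symSign (CamAux.flipU (u ω))) (i : ℕ)))) P
        = Measure.map (fun ω => ((fun i : Fin n => x ω (i : ℕ)),
          (fun i : Fin n => 1 - camT p q Minv (x ω) (u ω) (symSign (u ω)) (i : ℕ)))) P :=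
      Measure.map_congr (haeT.mono (fun ω h =>
        congrArg (Prod.mk (fun i : Fin n => x ω (i : ℕ))) h))
    rw [e1, ← hjoint, e2, e3]
  refine ⟨hmap1, fun i => ?_⟩
  -- part 2
  have hm' : MeasurableSpace.comap (fun ω (i : Fin n) => x ω (i : ℕ)) inferInstance
      ≤ (inferInstance : MeasurableSpace Ω) := hxfin.comap_le
  haveI : IsFiniteMeasure (P.trim hm') :=
    ⟨by rw [trim_measurableSet_eq hm' (@MeasurableSet.univ _ _)]; exact measure_lt_top P _⟩
  have hTbound : ∀ ω, ‖camT p q Minv (x ω) (u ω) (symSign (u ω)) (i : ℕ)‖ ≤ 1 := by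
    intro ω
    unfold camT
    split_ifs <;> simp
  have hint : Integrable (fun ω => camT p q Minv (x ω) (u ω) (symSign (u ω)) (i : ℕ)) P :=
    (integrable_const (1 : ℝ)).mono' (hTm (i : ℕ)).aestronglyMeasurable (ae_of_all _ hTbound)
  refine (ae_eq_condExp_of_forall_setIntegral_eq hm' hint
    (fun s _ hμs => integrableOn_const hμs.ne) (fun s hs hμs => ?_)
    (aestronglyMeasurable_const)).symm
  obtain ⟨A, hA, rfl⟩ := hs
  have hsmeas : MeasurableSet ((fun ω (i : Fin n) => x ω (i : ℕ)) ⁻¹' A) := hxfin hA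
  set s := (fun ω (i : Fin n) => x ω (i : ℕ)) ⁻¹' A with hsdef
  -- the indicator-pairing function
  have hFm : Measurable (fun z : (Fin n → Fin p → ℝ) × (Fin n → ℝ) =>
      Set.indicator A (fun _ => (1 : ℝ)) z.1 * z.2 i) :=
    ((measurable_const.indicator hA).comp measurable_fst).mul
      ((measurable_pi_apply i).comp measurable_snd)
  have hI1 : ∫ z, (Set.indicator A (fun _ => (1 : ℝ)) z.1 * z.2 i)
        ∂(Measure.map (fun ω => ((fun i : Fin n => x ω (i : ℕ)),
          (fun i : Fin n => camT p q Minv (x ω) (u ω) (symSign (u ω)) (i : ℕ)))) P)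
      = ∫ ω, Set.indicator A (fun _ => (1 : ℝ)) (fun i : Fin n => x ω (i : ℕ))
          * camT p q Minv (x ω) (u ω) (symSign (u ω)) (i : ℕ) ∂P :=
    integral_map hpm1.aemeasurable hFm.aestronglyMeasurable
  have hI2 : ∫ z, (Set.indicator A (fun _ => (1 : ℝ)) z.1 * z.2 i)
        ∂(Measure.map (fun ω => ((fun i : Fin n => x ω (i : ℕ)),
          (fun i : Fin n => 1 - camT p q Minv (x ω) (u ω) (symSign (u ω)) (i : ℕ)))) P)
      = ∫ ω, Set.indicator A (fun _ => (1 : ℝ)) (fun i : Fin n => x ω (i : ℕ))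
          * (1 - camT p q Minv (x ω) (u ω) (symSign (u ω)) (i : ℕ)) ∂P :=
    integral_map hpm2.aemeasurable hFm.aestronglyMeasurable
  have hkey : ∫ ω, Set.indicator A (fun _ => (1 : ℝ)) (fun i : Fin n => x ω (i : ℕ))
        * camT p q Minv (x ω) (u ω) (symSign (u ω)) (i : ℕ) ∂P
      = ∫ ω, Set.indicator A (fun _ => (1 : ℝ)) (fun i : Fin n => x ω (i : ℕ))
        * (1 - camT p q Minv (x ω) (u ω) (symSign (u ω)) (i : ℕ)) ∂P := by
    rw [← hI1, ← hI2, hmap1]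
  have hind1 : ∀ ω, Set.indicator A (fun _ => (1 : ℝ)) (fun i : Fin n => x ω (i : ℕ))
      * camT p q Minv (x ω) (u ω) (symSign (u ω)) (i : ℕ)
      = Set.indicator s (fun ω => camT p q Minv (x ω) (u ω) (symSign (u ω)) (i : ℕ)) ω := by
    intro ω
    by_cases hω : ω ∈ s
    · rw [Set.indicator_of_mem hω, Set.indicator_of_mem (by exact hω), one_mul]
    · rw [Set.indicator_of_notMem hω, Set.indicator_of_notMem (by exact hω), zero_mul]
  have hind2 : ∀ ω, Set.indicator A (fun _ => (1 : ℝ)) (fun i : Fin n => x ω (i : ℕ))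
      * (1 - camT p q Minv (x ω) (u ω) (symSign (u ω)) (i : ℕ))
      = Set.indicator s (fun ω => 1 - camT p q Minv (x ω) (u ω) (symSign (u ω)) (i : ℕ)) ω := by
    intro ω
    by_cases hω : ω ∈ s
    · rw [Set.indicator_of_mem hω, Set.indicator_of_mem (by exact hω), one_mul]
    · rw [Set.indicator_of_notMem hω, Set.indicator_of_notMem (by exact hω), zero_mul]
  rw [integral_congr_ae (ae_of_all _ hind1), integral_congr_ae (ae_of_all _ hind2),
    integral_indicator hsmeas, integral_indicator hsmeas] at hkey
  have hsub : ∫ ω in s, (1 - camT p q Minv (x ω) (u ω) (symSign (u ω)) (i : ℕ)) ∂P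
      = (P s).toReal - ∫ ω in s, camT p q Minv (x ω) (u ω) (symSign (u ω)) (i : ℕ) ∂P := by
    rw [integral_sub (integrable_const (1 : ℝ)).integrableOn hint.integrableOn,
      setIntegral_const, smul_eq_mul, mul_one, measureReal_def]
  rw [hsub] at hkey
  rw [setIntegral_const, smul_eq_mul, measureReal_def]
  linarith

end
end

section
/- For s > 0 define the lower incomplete gamma function γ(s,t) = ∫₀ᵗ x^{s−1}e^{−x}dx for t > 0. Then the ratio t ↦ γ(s+1,t)/γ(s,t) is strictly increasing on (0,∞), tends to 0 as t → 0⁺, and tends to s as t → ∞. Consequently, for every c ∈ (0, s) there exists a unique t* > 0 with γ(s+1, t*) = c·γ(s, t*); in particular, for integers p ≥ 1 and reals D > 0, n > 0 with n > D, the equation γ(p/2, a/2)·Dp = 2γ(p/2+1, a/2)·n has a unique positive root a*. -/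
open Set Filter MeasureTheory

noncomputable section

/-- The lower incomplete gamma function `γ(s,t) = ∫₀ᵗ x^{s-1} e^{-x} dx`. -/
def lincGamma (s t : ℝ) : ℝ := ∫ x in Set.Ioc (0 : ℝ) t, x ^ (s - 1) * Real.exp (-x)

private lemma lg_intOn {s : ℝ} (hs : 0 < s) :
    IntegrableOn (fun x : ℝ => x ^ (s - 1) * Real.exp (-x)) (Set.Ioi 0) :=
  (Real.GammaIntegral_convergent hs).congr_fun (fun x _ => mul_comm _ _) measurableSet_Ioi

private lemma lg_intOn_Ioc {s : ℝ} (hs : 0 < s) {a : ℝ} (ha : 0 ≤ a) (b : ℝ) :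
    IntegrableOn (fun x : ℝ => x ^ (s - 1) * Real.exp (-x)) (Set.Ioc a b) :=
  (lg_intOn hs).mono_set fun x hx => mem_Ioi.mpr (ha.trans_lt hx.1)

private lemma lg_pos {s : ℝ} (hs : 0 < s) {t : ℝ} (ht : 0 < t) : 0 < lincGamma s t := by
  rw [lincGamma, ← intervalIntegral.integral_of_le ht.le]
  apply intervalIntegral.intervalIntegral_pos_of_pos_on
  · exact (intervalIntegrable_iff_integrableOn_Ioc_of_le ht.le).mpr (lg_intOn_Ioc hs le_rfl t)
  · intro x hx
    exact mul_pos (Real.rpow_pos_of_pos hx.1 _) (Real.exp_pos _)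
  · exact ht

private lemma lg_succ_eq {s : ℝ} (t : ℝ) :
    lincGamma (s + 1) t = ∫ x in Set.Ioc (0 : ℝ) t, x * (x ^ (s - 1) * Real.exp (-x)) := by
  rw [lincGamma]
  refine setIntegral_congr_fun measurableSet_Ioc (fun x hx => ?_)
  have hx0 : (0:ℝ) < x := hx.1
  have : x ^ (s + 1 - 1) = x ^ (s - 1) * x := by
    rw [show s + 1 - 1 = (s - 1) + 1 by ring, Real.rpow_add hx0, Real.rpow_one]
  rw [this]; ring

private lemma lg_mul_intOn {s : ℝ} (hs : 0 < s) {a : ℝ} (ha : 0 ≤ a) (b : ℝ) :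
    IntegrableOn (fun x : ℝ => x * (x ^ (s - 1) * Real.exp (-x))) (Set.Ioc a b) := by
  refine (lg_intOn_Ioc (by linarith : (0:ℝ) < s + 1) ha b).congr_fun (fun x hx => ?_)
    measurableSet_Ioc
  have hx0 : (0:ℝ) < x := ha.trans_lt hx.1
  have : x ^ (s + 1 - 1) = x ^ (s - 1) * x := by
    rw [show s + 1 - 1 = (s - 1) + 1 by ring, Real.rpow_add hx0, Real.rpow_one]
  beta_reduce; rw [this]; ring

private lemma lg_succ_lt {s : ℝ} (hs : 0 < s) {t : ℝ} (ht : 0 < t) :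
    lincGamma (s + 1) t < t * lincGamma s t := by
  have key : 0 < ∫ x in Set.Ioc (0:ℝ) t, (t - x) * (x ^ (s - 1) * Real.exp (-x)) := by
    rw [← intervalIntegral.integral_of_le ht.le]
    apply intervalIntegral.intervalIntegral_pos_of_pos_on
    · refine (intervalIntegrable_iff_integrableOn_Ioc_of_le ht.le).mpr ?_
      exact IntegrableOn.congr_fun
        (((lg_intOn_Ioc hs le_rfl t).const_mul t).sub (lg_mul_intOn hs le_rfl t))
        (fun x _ => by simp only [Pi.sub_apply]; ring) measurableSet_Ioc
    · intro x hx
      exact mul_pos (by linarith [hx.2]) (mul_pos (Real.rpow_pos_of_pos hx.1 _) (Real.exp_pos _))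
    · exact ht
  have hsplit : (∫ x in Set.Ioc (0:ℝ) t, (t - x) * (x ^ (s - 1) * Real.exp (-x)))
      = t * lincGamma s t - lincGamma (s + 1) t := by
    rw [lg_succ_eq, lincGamma, ← integral_const_mul, ← integral_sub
      ((lg_intOn_Ioc hs le_rfl t).const_mul t) (lg_mul_intOn hs le_rfl t)]
    exact setIntegral_congr_fun measurableSet_Ioc (fun x _ => by ring)
  linarith [hsplit ▸ key]

private lemma lg_strictMono (s : ℝ) (hs : 0 < s) :
    StrictMonoOn (fun t => lincGamma (s + 1) t / lincGamma s t) (Set.Ioi (0 : ℝ)) := by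
  intro t1 ht1 t2 ht2 h12
  have ht1' : (0:ℝ) < t1 := ht1
  have ht2' : (0:ℝ) < t2 := ht2
  have hB1 := lg_pos hs ht1'
  have hB2 := lg_pos hs ht2'
  set ΔB := ∫ x in Set.Ioc t1 t2, x ^ (s - 1) * Real.exp (-x) with hΔBdef
  set ΔA := ∫ x in Set.Ioc t1 t2, x * (x ^ (s - 1) * Real.exp (-x)) with hΔAdef
  have haddB : lincGamma s t2 = lincGamma s t1 + ΔB := by
    rw [lincGamma, lincGamma, hΔBdef,
      ← setIntegral_union (Set.Ioc_disjoint_Ioc_of_le le_rfl) measurableSet_Ioc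
        (lg_intOn_Ioc hs le_rfl t1) (lg_intOn_Ioc hs ht1'.le t2),
      Set.Ioc_union_Ioc_eq_Ioc ht1'.le h12.le]
  have haddA : lincGamma (s + 1) t2 = lincGamma (s + 1) t1 + ΔA := by
    rw [lg_succ_eq, lg_succ_eq, hΔAdef,
      ← setIntegral_union (Set.Ioc_disjoint_Ioc_of_le le_rfl) measurableSet_Ioc
        (lg_mul_intOn hs le_rfl t1) (lg_mul_intOn hs ht1'.le t2),
      Set.Ioc_union_Ioc_eq_Ioc ht1'.le h12.le]
  have hΔB : 0 < ΔB := by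
    rw [hΔBdef, ← intervalIntegral.integral_of_le h12.le]
    apply intervalIntegral.intervalIntegral_pos_of_pos_on
    · exact (intervalIntegrable_iff_integrableOn_Ioc_of_le h12.le).mpr
        (lg_intOn_Ioc hs ht1'.le t2)
    · intro x hx
      exact mul_pos (Real.rpow_pos_of_pos (ht1'.trans hx.1) _) (Real.exp_pos _)
    · exact h12
  have hΔA : t1 * ΔB ≤ ΔA := by
    rw [hΔBdef, hΔAdef, ← integral_const_mul]
    refine setIntegral_mono_on ((lg_intOn_Ioc hs ht1'.le t2).const_mul t1)
      (lg_mul_intOn hs ht1'.le t2) measurableSet_Ioc (fun x hx => ?_)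
    have hw : 0 ≤ x ^ (s - 1) * Real.exp (-x) :=
      le_of_lt (mul_pos (Real.rpow_pos_of_pos (ht1'.trans hx.1) _) (Real.exp_pos _))
    exact mul_le_mul_of_nonneg_right hx.1.le hw
  have hlt := lg_succ_lt hs ht1'
  simp only
  rw [div_lt_div_iff₀ hB1 hB2, haddA, haddB]
  nlinarith [mul_le_mul_of_nonneg_right hΔA hB1.le, mul_lt_mul_of_pos_right hlt hΔB]

private lemma lg_tendsto_zero (s : ℝ) (hs : 0 < s) :
    Tendsto (fun t => lincGamma (s + 1) t / lincGamma s t)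
      (nhdsWithin 0 (Set.Ioi (0 : ℝ))) (nhds 0) := by
  apply tendsto_of_tendsto_of_tendsto_of_le_of_le' (tendsto_const_nhds (x := (0:ℝ)))
    (tendsto_id.mono_left nhdsWithin_le_nhds)
  · filter_upwards [self_mem_nhdsWithin] with t ht
    exact le_of_lt (div_pos (lg_pos (by linarith) ht) (lg_pos hs ht))
  · filter_upwards [self_mem_nhdsWithin] with t ht
    have ht' : (0:ℝ) < t := ht
    rw [div_le_iff₀ (lg_pos hs ht')]
    simpa using (lg_succ_lt hs ht').le

private lemma lg_tendsto_Gamma (s : ℝ) (hs : 0 < s) :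
    Tendsto (lincGamma s) atTop (nhds (Real.Gamma s)) := by
  have h0 := intervalIntegral_tendsto_integral_Ioi 0 (lg_intOn hs) tendsto_id
  have heq : (∫ x in Set.Ioi (0:ℝ), x ^ (s - 1) * Real.exp (-x)) = Real.Gamma s := by
    rw [Real.Gamma_eq_integral hs]
    exact setIntegral_congr_fun measurableSet_Ioi (fun x _ => mul_comm _ _)
  rw [heq] at h0
  refine h0.congr' ?_
  filter_upwards [eventually_ge_atTop (0:ℝ)] with t ht
  simp only [id_eq]
  rw [lincGamma, intervalIntegral.integral_of_le ht]

private lemma lg_tendsto_atTop (s : ℝ) (hs : 0 < s) :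
    Tendsto (fun t => lincGamma (s + 1) t / lincGamma s t) atTop (nhds s) := by
  have hG := Real.Gamma_pos_of_pos hs
  have h := (lg_tendsto_Gamma (s + 1) (by linarith)).div (lg_tendsto_Gamma s hs) hG.ne'
  rwa [Real.Gamma_add_one hs.ne', mul_div_assoc, div_self hG.ne', mul_one] at h

private lemma lg_continuousAt {s : ℝ} (hs : 0 < s) {t : ℝ} (ht : 0 < t) :
    ContinuousAt (lincGamma s) t := by
  have hint : IntegrableOn (fun x : ℝ => x ^ (s - 1) * Real.exp (-x)) (Set.Icc 0 (t + 1)) := by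
    rw [integrableOn_Icc_iff_integrableOn_Ioc]
    exact lg_intOn_Ioc hs le_rfl (t + 1)
  have hcont := intervalIntegral.continuousOn_primitive (μ := volume) hint
  have : lincGamma s = fun x => ∫ u in Set.Ioc (0:ℝ) x, u ^ (s - 1) * Real.exp (-u) := rfl
  rw [this]
  exact hcont.continuousAt (Icc_mem_nhds (by linarith) (by linarith))

private lemma lg_exists_unique (s : ℝ) (hs : 0 < s) :
    ∀ c ∈ Set.Ioo (0 : ℝ) s, ∃! t : ℝ, 0 < t ∧ lincGamma (s + 1) t = c * lincGamma s t := by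
  intro c hc
  set R := fun t => lincGamma (s + 1) t / lincGamma s t with hR
  have hRc : ∀ x : ℝ, 0 < x → ContinuousAt R x := fun x hx =>
    (lg_continuousAt (by linarith : (0:ℝ) < s + 1) hx).div (lg_continuousAt hs hx)
      (lg_pos hs hx).ne'
  -- find t1 with R t1 < c
  have h0 := lg_tendsto_zero s hs
  have hev1 : ∀ᶠ x in nhdsWithin 0 (Set.Ioi (0:ℝ)), R x < c :=
    h0.eventually (eventually_lt_nhds hc.1)
  obtain ⟨t1, ht1R, ht1⟩ := (hev1.and self_mem_nhdsWithin).exists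
  -- find t2 with c < R t2
  have hev2 : ∀ᶠ x in atTop, c < R x :=
    (lg_tendsto_atTop s hs).eventually (eventually_gt_nhds hc.2)
  obtain ⟨t2, ht2R, ht2⟩ := (hev2.and (eventually_gt_atTop 0)).exists
  have ht1' : (0:ℝ) < t1 := ht1
  have h12 : t1 < t2 := by
    by_contra h
    push_neg at h
    have := (lg_strictMono s hs).monotoneOn (Set.mem_Ioi.mpr ht2) (Set.mem_Ioi.mpr ht1') h
    linarith
  have hcontIcc : ContinuousOn R (Set.Icc t1 t2) := fun x hx =>
    (hRc x (lt_of_lt_of_le ht1' hx.1)).continuousWithinAt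
  have hc' : c ∈ Set.Icc (R t1) (R t2) := ⟨ht1R.le, ht2R.le⟩
  obtain ⟨t, htmem, htval⟩ := intermediate_value_Icc h12.le hcontIcc hc'
  have htpos : 0 < t := lt_of_lt_of_le ht1' htmem.1
  have hFt := lg_pos hs htpos
  refine ⟨t, ⟨htpos, ?_⟩, ?_⟩
  · have : lincGamma (s + 1) t / lincGamma s t = c := htval
    field_simp at this
    linarith [this]
  · rintro y ⟨hy, hyEq⟩
    have hFy := lg_pos hs hy
    have hRy : R y = c := by
      simp only [hR, hyEq, mul_div_assoc, div_self hFy.ne', mul_one]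
    have hRt : R t = c := htval
    exact (lg_strictMono s hs).injOn (Set.mem_Ioi.mpr hy) (Set.mem_Ioi.mpr htpos)
      (by show R y = R t; rw [hRy, hRt])

/-- **Monotonicity of the incomplete-gamma ratio and existence of the rerandomization
threshold.**  For `s > 0`, the ratio `t ↦ γ(s+1,t)/γ(s,t)` is strictly increasing on `(0,∞)`,
tends to `0` as `t → 0⁺` and to `s` as `t → ∞`; hence for every `c ∈ (0,s)` there is a unique
`t* > 0` with `γ(s+1,t*) = c γ(s,t*)`.  In particular, for integers `p ≥ 1` and reals
`D > 0`, `n > D`, the equation `γ(p/2, a/2)·Dp = 2γ(p/2+1, a/2)·n` has a unique positive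
root `a*`. -/
theorem lincGamma_ratio_strictMono_and_unique_root (s : ℝ) (hs : 0 < s) :
    StrictMonoOn (fun t => lincGamma (s + 1) t / lincGamma s t) (Set.Ioi (0 : ℝ))
    ∧ Tendsto (fun t => lincGamma (s + 1) t / lincGamma s t)
        (nhdsWithin 0 (Set.Ioi (0 : ℝ))) (nhds 0)
    ∧ Tendsto (fun t => lincGamma (s + 1) t / lincGamma s t) atTop (nhds s)
    ∧ (∀ c ∈ Set.Ioo (0 : ℝ) s, ∃! t : ℝ, 0 < t ∧ lincGamma (s + 1) t = c * lincGamma s t)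
    ∧ (∀ (p : ℕ), 1 ≤ p → ∀ D n : ℝ, 0 < D → D < n →
        ∃! a : ℝ, 0 < a ∧
          lincGamma ((p : ℝ) / 2) (a / 2) * (D * p)
            = 2 * lincGamma ((p : ℝ) / 2 + 1) (a / 2) * n) := by
  refine ⟨lg_strictMono s hs, lg_tendsto_zero s hs, lg_tendsto_atTop s hs,
    lg_exists_unique s hs, ?_⟩
  intro p hp D n hD hDn
  have hn : 0 < n := hD.trans hDn
  have hn' : n ≠ 0 := hn.ne'
  have hp' : (1:ℝ) ≤ (p:ℝ) := by exact_mod_cast hp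
  have hs' : 0 < (p:ℝ)/2 := by linarith
  have hc : D * p / (2 * n) ∈ Set.Ioo 0 ((p:ℝ)/2) := by
    constructor
    · positivity
    · rw [div_lt_div_iff₀ (by positivity) (by norm_num : (0:ℝ) < 2)]
      nlinarith
  obtain ⟨t, ⟨ht, heq⟩, huniq⟩ := lg_exists_unique _ hs' _ hc
  refine ⟨2 * t, ⟨by linarith, ?_⟩, ?_⟩
  · have h2 : (2 * t) / 2 = t := by ring
    rw [h2, heq]
    field_simp
  · rintro a ⟨ha, hEq⟩
    have ha2 : a / 2 = t := by
      refine huniq (a/2) ⟨by linarith, ?_⟩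
      rw [div_mul_eq_mul_div, eq_div_iff (by positivity : (2:ℝ) * n ≠ 0)]
      linarith [hEq]
    linarith

end
end
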